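/- Let A ∈ ℝ^{n×n} be symmetric positive definite, let b ∈ ℝⁿ be nonzero, let c ∈ ℝ, and set f(u) = ⟨u, Au⟩ − 2⟨u, b⟩ + c and y = A⁻¹b. Let X ∈ ℝ^{n×p} (p ≥ 1) have columns x₁,…,xₚ, and let α > 0 be such that X and αy satisfy the vertex non-cover condition. Suppose η > 0 satisfies η < 2α⟨b, A⁻¹b⟩ − 2·max_{i∈[p]} ⟨b, xᵢ⟩. Let T be the convex cone {Σ_{i=1}^p λᵢ·(xᵢ − αy) : λᵢ ≥ 0}, and let I ⊆ [p] be a set of indices such that every i ∈ [p] for which xᵢ − αy generates an extreme ray of T belongs to I. Then for every global minimizer β* of β ↦ f(Xβ) + η·Σ_{i=1}^p βᵢ over the nonnegative orthant {β ∈ ℝᵖ : βᵢ ≥ 0 for all i}, one has βᵢ* = 0 for every i ∉ I. -/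

import Mathlib

/-!
Suppose `β i > 0` while `x i - αy` generates no extreme ray of `T`. Splitting it inside `T`
yields `x i - αy = ∑ νⱼ (xⱼ - αy)` with `ν ≥ 0` and `νₖ > 0` for some `xₖ ≠ x i`. If
`∑ ν ≤ 1`, then `x i` is a convex combination of `αy` and columns giving `xₖ` positive weight,
which the vertex non-cover condition forbids; so `∑ ν > 1`.

The KKT conditions of the minimization (every partial derivative `2⟨xⱼ, Au - b⟩ + η` is
nonnegative and vanishes where `βⱼ > 0`, with `u = ∑ βⱼ xⱼ`), weighted by `ν`, give
`η + 2α⟨y, Au - b⟩ ≥ 0`; weighted by `β` they give `2⟨u, Au - b⟩ + η ∑ β = 0`. With the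
Cauchy–Schwarz inequality `⟨u, b⟩² ≤ ⟨u, Au⟩⟨y, b⟩` these force
`α⟨y, b⟩ ∑ β ≤ ⟨u, b⟩ ≤ ∑ β · maxⱼ ⟨b, xⱼ⟩`, i.e. `α⟨b, A⁻¹b⟩ ≤ maxⱼ ⟨b, xⱼ⟩`, which
contradicts `0 < η < 2α⟨b, A⁻¹b⟩ - 2 maxⱼ ⟨b, xⱼ⟩`.
-/

open Finset Matrix

noncomputable section

/-- A nonzero vector `w` generates an extreme ray of the convex cone `T`. -/
def GeneratesExtremeRay {E : Type*} [AddCommGroup E] [Module ℝ E]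
    (T : Set E) (w : E) : Prop :=
  w ≠ 0 ∧ w ∈ T ∧ ∀ w₁ w₂, w₁ ∈ T → w₂ ∈ T → w = w₁ + w₂ →
    (∃ c : ℝ, 0 ≤ c ∧ w₁ = c • w) ∧ (∃ c : ℝ, 0 ≤ c ∧ w₂ = c • w)

/-- `X` (with columns `x i`) and the point `v` satisfy the vertex non-cover condition. -/
def VertexNonCover {E : Type*} [AddCommGroup E] [Module ℝ E] {p : ℕ}
    (x : Fin p → E) (v : E) : Prop :=
  (∀ i, v ≠ x i) ∧
    Set.extremePoints ℝ (convexHull ℝ (Set.range x ∪ {v})) = Set.range x ∪ {v}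

open Filter Topology

theorem Convex.eq_of_mem_extremePoints_of_sum_smul_eq {𝕜 E ι : Type*} [Field 𝕜] [LinearOrder 𝕜]
    [IsStrictOrderedRing 𝕜] [AddCommGroup E] [Module 𝕜 E] {C : Set E} (hC : Convex 𝕜 C) {e : E}
    (he : e ∈ C.extremePoints 𝕜) {s : Finset ι} {t : ι → 𝕜} {z : ι → E}
    (ht : ∀ j ∈ s, 0 ≤ t j) (hz : ∀ j ∈ s, z j ∈ C)
    (hsum : ∑ j ∈ s, t j • z j = (∑ j ∈ s, t j) • e) {k : ι} (hk : k ∈ s) (htk : 0 < t k) :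
    z k = e := by
  classical
  by_contra hzk
  set P := s.filter (z · ≠ e)
  have hP : ∑ j ∈ P, t j • z j = (∑ j ∈ P, t j) • e := by
    have hfix : ∑ j ∈ s.filter (z · = e), t j • z j = (∑ j ∈ s.filter (z · = e), t j) • e := by
      rw [Finset.sum_smul]
      exact Finset.sum_congr rfl fun j hj => by rw [(Finset.mem_filter.1 hj).2]
    rw [← Finset.sum_filter_add_sum_filter_not s (z · = e), hfix,
      ← Finset.sum_filter_add_sum_filter_not s (z · = e), add_smul] at hsum
    exact add_left_cancel hsum
  have hkP : k ∈ P := Finset.mem_filter.2 ⟨hk, hzk⟩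
  have hPpos : 0 < ∑ j ∈ P, t j :=
    htk.trans_le (Finset.single_le_sum (fun j hj => ht j (Finset.mem_filter.1 hj).1) hkP)
  have hcenter : P.centerMass t z = e := by
    rw [Finset.centerMass, hP, inv_smul_smul₀ hPpos.ne']
  have hmem := P.centerMass_mem_convexHull (s := C \ {e})
    (fun j hj => ht j (Finset.mem_filter.1 hj).1) hPpos
    (fun j hj => ⟨hz j (Finset.mem_filter.1 hj).1, (Finset.mem_filter.1 hj).2⟩)
  rw [hcenter] at hmem
  exact (hC.mem_extremePoints_iff_mem_sdiff_convexHull_sdiff.1 he).2 hmem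

theorem VertexNonCover.eq_of_sum_smul_eq {E ι : Type*} [AddCommGroup E] [Module ℝ E] {p : ℕ}
    {x : Fin p → E} {v : E} (h : VertexNonCover x v) {e : E} (he : e ∈ Set.range x ∪ {v})
    {s : Finset ι} {t : ι → ℝ} {z : ι → E} (ht : ∀ j ∈ s, 0 ≤ t j)
    (hz : ∀ j ∈ s, z j ∈ Set.range x ∪ {v}) (hsum : ∑ j ∈ s, t j • z j = (∑ j ∈ s, t j) • e)
    {k : ι} (hk : k ∈ s) (htk : 0 < t k) : z k = e :=
  (convex_convexHull ℝ _).eq_of_mem_extremePoints_of_sum_smul_eq (h.2.symm ▸ he) ht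
    (fun j hj => subset_convexHull ℝ _ (hz j hj)) hsum hk htk

theorem exists_sum_smul_eq_of_not_generatesExtremeRay {E ι : Type*} [AddCommGroup E]
    [Module ℝ E] [Fintype ι] {w : ι → E} {i : ι} (hw : w i ≠ 0)
    (hi : ¬ GeneratesExtremeRay {u | ∃ lam : ι → ℝ, (∀ j, 0 ≤ lam j) ∧ u = ∑ j, lam j • w j}
      (w i)) :
    ∃ ν : ι → ℝ, (∀ j, 0 ≤ ν j) ∧ w i = ∑ j, ν j • w j ∧ ∃ k, 0 < ν k ∧ w k ≠ w i := by
  classical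
  have hmem : w i ∈ {u | ∃ lam : ι → ℝ, (∀ j, 0 ≤ lam j) ∧ u = ∑ j, lam j • w j} :=
    ⟨Pi.single i 1, fun j => by simp [Pi.single_apply]; split_ifs <;> norm_num,
      by simp [Pi.single_apply, ite_smul]⟩
  have hsplit : ¬ ∀ w₁ w₂, _ → _ → w i = w₁ + w₂ → _ := fun hall => hi ⟨hw, hmem, hall⟩
  push Not at hsplit
  obtain ⟨_, _, ⟨lam, hlam, rfl⟩, ⟨mu, hmu, rfl⟩, hsum, hnot⟩ := hsplit
  refine ⟨lam + mu, fun j => add_nonneg (hlam j) (hmu j), ?_, ?_⟩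
  · simp only [hsum, Pi.add_apply, add_smul, Finset.sum_add_distrib]
  by_contra! hall
  have hcollapse : ∀ a : ι → ℝ, (∀ j, 0 ≤ a j) → (∀ j, a j ≤ lam j + mu j) →
      ∑ j, a j • w j = (∑ j, a j) • w i := by
    intro a ha hale
    rw [Finset.sum_smul]
    refine Finset.sum_congr rfl fun j _ => ?_
    rcases (ha j).eq_or_lt with hj | hj
    · simp [← hj]
    · rw [hall j ((hj.trans_le (hale j)))]
  exact hnot ⟨_, Finset.sum_nonneg fun j _ => hlam j,
      hcollapse lam hlam fun j => le_add_of_nonneg_right (hmu j)⟩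
    _ (Finset.sum_nonneg fun j _ => hmu j)
    (hcollapse mu hmu fun j => le_add_of_nonneg_left (hlam j))

theorem VertexNonCover.one_lt_sum {E : Type*} [AddCommGroup E] [Module ℝ E] {p : ℕ}
    {x : Fin p → E} {v : E} (h : VertexNonCover x v) {ν : Fin p → ℝ} (hν : ∀ j, 0 ≤ ν j)
    {i : Fin p} (hrep : x i - v = ∑ j, ν j • (x j - v)) {k : Fin p} (hk : 0 < ν k)
    (hxk : x k ≠ x i) : 1 < ∑ j, ν j := by
  by_contra! hs
  have hcomb : ∑ j, ν j • x j = x i - v + (∑ j, ν j) • v := by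
    rw [hrep, Finset.sum_smul, ← Finset.sum_add_distrib]
    simp only [smul_sub, sub_add_cancel]
  -- `x i = (1 - ∑ ν) • v + ∑ νⱼ • xⱼ`, with the index `none` carrying `v`
  refine hxk (h.eq_of_sum_smul_eq (Or.inl ⟨i, rfl⟩) (s := Finset.univ)
    (t := fun o => o.elim (1 - ∑ j, ν j) ν) (z := fun o => o.elim v x) ?_ ?_ ?_
    (Finset.mem_univ (some k)) hk)
  · rintro (_ | j) _
    exacts [sub_nonneg.2 hs, hν j]
  · rintro (_ | j) _
    exacts [Or.inr rfl, Or.inl ⟨j, rfl⟩]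
  · simp only [Fintype.sum_option, Option.elim_none, Option.elim_some, hcomb]
    rw [sub_add_cancel, one_smul, sub_smul, one_smul]
    abel

theorem VertexNonCover.exists_one_lt_sum_of_not_generatesExtremeRay {E : Type*} [AddCommGroup E]
    [Module ℝ E] {p : ℕ} {x : Fin p → E} {v : E} (h : VertexNonCover x v) {i : Fin p}
    (hi : ¬ GeneratesExtremeRay
      {u | ∃ lam : Fin p → ℝ, (∀ j, 0 ≤ lam j) ∧ u = ∑ j, lam j • (x j - v)} (x i - v)) :
    ∃ ν : Fin p → ℝ, (∀ j, 0 ≤ ν j) ∧ x i - v = ∑ j, ν j • (x j - v) ∧ 1 < ∑ j, ν j := by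
  obtain ⟨ν, hν, hrep, k, hk, hxk⟩ :=
    exists_sum_smul_eq_of_not_generatesExtremeRay (w := fun j => x j - v)
      (sub_ne_zero.2 (h.1 i).symm) hi
  exact ⟨ν, hν, hrep, h.one_lt_sum hν hrep hk fun hx => hxk (by rw [hx])⟩

theorem nonneg_of_forall_mul_add_sq_nonneg {a b ε : ℝ} (hε : 0 < ε)
    (h : ∀ t, 0 < t → t ≤ ε → 0 ≤ t * b + t ^ 2 * a) : 0 ≤ b := by
  have hlim : Tendsto (fun t => b + t * a) (𝓝[>] 0) (𝓝 b) := by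
    have hcont : Continuous fun t : ℝ => b + t * a := by fun_prop
    simpa using (hcont.tendsto 0).mono_left nhdsWithin_le_nhds
  refine ge_of_tendsto hlim ?_
  filter_upwards [Ioc_mem_nhdsGT hε] with t ⟨ht, htε⟩
  have := h t ht htε
  exact (mul_nonneg_iff_of_pos_left ht).1 (by linear_combination this)

theorem Matrix.IsSymm.dotProduct_mulVec_comm {m R : Type*} [Fintype m] [CommSemiring R]
    {A : Matrix m m R} (hA : A.IsSymm) (u z : m → R) : u ⬝ᵥ A *ᵥ z = z ⬝ᵥ A *ᵥ u := by
  rw [dotProduct_mulVec, ← mulVec_transpose, hA.eq, dotProduct_comm]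

theorem sum_smul_eq_of_sub_eq_sum_smul_sub {E ι : Type*} [AddCommGroup E] [Module ℝ E]
    [Fintype ι] {x : ι → E} {w v : E} {ν : ι → ℝ} (h : w - v = ∑ j, ν j • (x j - v)) :
    ∑ j, ν j • x j = w - v + (∑ j, ν j) • v := by
  rw [h, Finset.sum_smul, ← Finset.sum_add_distrib]
  simp only [smul_sub, sub_add_cancel]

section Lasso

variable {m ι : Type*} [Fintype m] [Fintype ι]

def quadLoss (A : Matrix m m ℝ) (b : m → ℝ) (c : ℝ) (u : m → ℝ) : ℝ :=
  u ⬝ᵥ A *ᵥ u - 2 * (u ⬝ᵥ b) + c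

def lassoObjective (A : Matrix m m ℝ) (b : m → ℝ) (c η : ℝ) (x : ι → m → ℝ) (β : ι → ℝ) : ℝ :=
  quadLoss A b c (∑ i, β i • x i) + η * ∑ i, β i

def lassoGradient (A : Matrix m m ℝ) (b : m → ℝ) (η : ℝ) (x : ι → m → ℝ) (β : ι → ℝ) (j : ι) :
    ℝ :=
  2 * (x j ⬝ᵥ (A *ᵥ ∑ i, β i • x i - b)) + η

variable {A : Matrix m m ℝ} {b : m → ℝ} {c η : ℝ} {x : ι → m → ℝ} {β : ι → ℝ}

theorem quadLoss_add_smul (hA : A.IsSymm) (u z : m → ℝ) (t : ℝ) :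
    quadLoss A b c (u + t • z) =
      quadLoss A b c u + t * (2 * (z ⬝ᵥ (A *ᵥ u - b))) + t ^ 2 * (z ⬝ᵥ A *ᵥ z) := by
  simp only [quadLoss, mulVec_add, mulVec_smul, add_dotProduct, dotProduct_add, smul_dotProduct,
    dotProduct_smul, dotProduct_sub, smul_eq_mul, hA.dotProduct_mulVec_comm u z]
  ring

theorem lassoObjective_add_smul_single [DecidableEq ι] (hA : A.IsSymm) (j : ι) (t : ℝ) :
    lassoObjective A b c η x (β + t • Pi.single j 1) =
      lassoObjective A b c η x β + t * lassoGradient A b η x β j +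
        t ^ 2 * (x j ⬝ᵥ A *ᵥ x j) := by
  have hX : ∑ i, (β + t • Pi.single j (1 : ℝ) : ι → ℝ) i • x i = ∑ i, β i • x i + t • x j := by
    simp [add_smul, Finset.sum_add_distrib, Pi.single_apply, ite_smul]
  have hS : ∑ i, (β + t • Pi.single j (1 : ℝ) : ι → ℝ) i = ∑ i, β i + t := by
    simp [Finset.sum_add_distrib, Pi.single_apply]
  rw [lassoObjective, lassoObjective, hX, hS, quadLoss_add_smul hA, lassoGradient]
  ring

theorem sum_mul_lassoGradient (w : ι → ℝ) :
    ∑ j, w j * lassoGradient A b η x β j =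
      2 * ((∑ j, w j • x j) ⬝ᵥ (A *ᵥ ∑ i, β i • x i - b)) + η * ∑ j, w j := by
  simp only [lassoGradient, mul_add, Finset.sum_add_distrib, sum_dotProduct, smul_dotProduct,
    smul_eq_mul, Finset.mul_sum]
  congr 1 <;> exact Finset.sum_congr rfl fun j _ => by ring

section Minimizer

variable (hA : A.IsSymm) (hmin : IsMinOn (lassoObjective A b c η x) {γ | ∀ i, 0 ≤ γ i} β)
  (hβ : ∀ i, 0 ≤ β i)
include hA hmin hβ

theorem IsMinOn.lassoGradient_nonneg (j : ι) : 0 ≤ lassoGradient A b η x β j := by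
  classical
  refine nonneg_of_forall_mul_add_sq_nonneg (a := x j ⬝ᵥ A *ᵥ x j) one_pos fun t ht _ => ?_
  have hfeas : β + t • Pi.single j (1 : ℝ) ∈ {γ | ∀ i, 0 ≤ γ i} := fun i => by
    simp only [Pi.add_apply, Pi.smul_apply, smul_eq_mul]
    exact add_nonneg (hβ i) (mul_nonneg ht.le (by simp [Pi.single_apply]; split_ifs <;> norm_num))
  have := isMinOn_iff.1 hmin _ hfeas
  rw [lassoObjective_add_smul_single hA] at this
  linarith

theorem IsMinOn.lassoGradient_eq_zero {j : ι} (hj : 0 < β j) : lassoGradient A b η x β j = 0 := by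
  classical
  refine le_antisymm ?_ (hmin.lassoGradient_nonneg hA hβ j)
  refine neg_nonneg.1 (nonneg_of_forall_mul_add_sq_nonneg (a := x j ⬝ᵥ A *ᵥ x j) hj
    fun t ht htj => ?_)
  have hfeas : β + (-t) • Pi.single j (1 : ℝ) ∈ {γ | ∀ i, 0 ≤ γ i} := fun i => by
    rcases eq_or_ne i j with rfl | hij
    · simpa using htj
    · simpa [hij] using hβ i
  have := isMinOn_iff.1 hmin _ hfeas
  rw [lassoObjective_add_smul_single hA] at this
  linarith

theorem IsMinOn.two_mul_dotProduct_add_eq_zero :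
    2 * ((∑ i, β i • x i) ⬝ᵥ (A *ᵥ ∑ i, β i • x i - b)) + η * ∑ i, β i = 0 := by
  rw [← sum_mul_lassoGradient]
  refine Finset.sum_eq_zero fun j _ => ?_
  rcases (hβ j).eq_or_lt with hj | hj
  · rw [← hj, zero_mul]
  · rw [hmin.lassoGradient_eq_zero hA hβ hj, mul_zero]

theorem IsMinOn.nonneg_add_two_mul_dotProduct {i : ι} (hi : 0 < β i) {v : m → ℝ} {ν : ι → ℝ}
    (hν : ∀ j, 0 ≤ ν j) (hrep : x i - v = ∑ j, ν j • (x j - v)) (hν1 : 1 < ∑ j, ν j) :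
    0 ≤ η + 2 * (v ⬝ᵥ (A *ᵥ ∑ i, β i • x i - b)) := by
  have hsum : 0 ≤ ∑ j, ν j * lassoGradient A b η x β j :=
    Finset.sum_nonneg fun j _ => mul_nonneg (hν j) (hmin.lassoGradient_nonneg hA hβ j)
  have hGi := hmin.lassoGradient_eq_zero hA hβ hi
  rw [sum_mul_lassoGradient, sum_smul_eq_of_sub_eq_sum_smul_sub hrep] at hsum
  rw [lassoGradient] at hGi
  simp only [add_dotProduct, sub_dotProduct, smul_dotProduct, smul_eq_mul] at hsum
  refine (mul_nonneg_iff_of_pos_left (sub_pos.2 hν1)).1 ?_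
  linear_combination hsum + hGi

end Minimizer

theorem IsMinOn.mul_dotProduct_mul_sum_le
    (hmin : IsMinOn (lassoObjective A b c η x) {γ | ∀ i, 0 ≤ γ i} β) (hβ : ∀ i, 0 ≤ β i)
    (hA : A.PosSemidef) {y : m → ℝ} (hAy : A *ᵥ y = b)
    {α : ℝ} (hα : 0 ≤ α) (hη : 0 < η)
    (hgrad : 0 ≤ η + 2 * ((α • y) ⬝ᵥ (A *ᵥ ∑ i, β i • x i - b))) :
    α * (y ⬝ᵥ b) * ∑ i, β i ≤ (∑ i, β i • x i) ⬝ᵥ b := by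
  classical
  have hsymm : A.IsSymm := hA.isHermitian
  have hstat := hmin.two_mul_dotProduct_add_eq_zero hsymm hβ
  set u := ∑ i, β i • x i
  have hQ : 0 ≤ u ⬝ᵥ A *ᵥ u := by simpa using hA.dotProduct_mulVec_nonneg u
  have hyu : y ⬝ᵥ A *ᵥ u = u ⬝ᵥ b := by rw [hsymm.dotProduct_mulVec_comm, hAy]
  have hcs : (u ⬝ᵥ b) * (u ⬝ᵥ b) ≤ (u ⬝ᵥ A *ᵥ u) * (y ⬝ᵥ b) := by
    have := LinearMap.BilinForm.apply_mul_apply_le_of_forall_zero_le (toLinearMap₂' ℝ A)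
      (fun z => by simpa [toLinearMap₂'_apply'] using hA.dotProduct_mulVec_nonneg z) u y
    simpa only [toLinearMap₂'_apply', hAy, hyu] using this
  simp only [dotProduct_sub, smul_dotProduct, smul_eq_mul, hyu] at hstat hgrad
  have hr : 0 ≤ u ⬝ᵥ b := by
    linarith [mul_nonneg hη.le (Fintype.sum_nonneg hβ)]
  refine le_of_mul_le_mul_left ?_ hη
  calc η * (α * (y ⬝ᵥ b) * ∑ i, β i)
      = 2 * α * ((y ⬝ᵥ b) * (u ⬝ᵥ b) - (u ⬝ᵥ A *ᵥ u) * (y ⬝ᵥ b)) := by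
        linear_combination (α * (y ⬝ᵥ b)) * hstat
    _ ≤ 2 * α * ((y ⬝ᵥ b) * (u ⬝ᵥ b) - (u ⬝ᵥ b) * (u ⬝ᵥ b)) := by gcongr
    _ = (u ⬝ᵥ b) * (2 * α * (y ⬝ᵥ b - u ⬝ᵥ b)) := by ring
    _ ≤ (u ⬝ᵥ b) * η := by gcongr; linarith
    _ = η * (u ⬝ᵥ b) := mul_comm _ _

end Lasso

theorem stmt2_general {n p : ℕ} (hp : 0 < p)
    (A : Matrix (Fin n) (Fin n) ℝ) (hA : A.PosDef)
    (b : Fin n → ℝ) (c : ℝ)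
    (y : Fin n → ℝ) (hy : y = A⁻¹.mulVec b)
    (x : Fin p → (Fin n → ℝ))
    (α : ℝ) (hα : 0 < α)
    (hvnc : VertexNonCover x (α • y))
    (η : ℝ) (hη0 : 0 < η)
    (hη : η < 2 * α * (b ⬝ᵥ A⁻¹.mulVec b) - 2 * Finset.univ.sup'
      (Finset.univ_nonempty_iff.mpr ⟨⟨0, hp⟩⟩) (fun i => b ⬝ᵥ x i))
    (T : Set (Fin n → ℝ))
    (hT : T = {v | ∃ lam : Fin p → ℝ, (∀ i, 0 ≤ lam i) ∧
      v = ∑ i, lam i • (x i - α • y)})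
    (I : Set (Fin p))
    (hI : ∀ i, GeneratesExtremeRay T (x i - α • y) → i ∈ I)
    (β : Fin p → ℝ) (hβ : ∀ i, 0 ≤ β i)
    (hmin : ∀ γ : Fin p → ℝ, (∀ i, 0 ≤ γ i) →
      ((∑ i, β i • x i) ⬝ᵥ A.mulVec (∑ i, β i • x i)
          - 2 * ((∑ i, β i • x i) ⬝ᵥ b) + c) + η * ∑ i, β i ≤
        ((∑ i, γ i • x i) ⬝ᵥ A.mulVec (∑ i, γ i • x i)
          - 2 * ((∑ i, γ i • x i) ⬝ᵥ b) + c) + η * ∑ i, γ i) :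
    ∀ i, i ∉ I → β i = 0 := by
  intro i hiI
  by_contra hβi
  replace hβi : 0 < β i := (hβ i).lt_of_ne' hβi
  have hray : ¬ GeneratesExtremeRay T (x i - α • y) := fun h => hiI (hI i h)
  rw [hT] at hray
  obtain ⟨ν, hν, hrep, hν1⟩ := hvnc.exists_one_lt_sum_of_not_generatesExtremeRay hray
  have hminOn : IsMinOn (lassoObjective A b c η x) {γ | ∀ i, 0 ≤ γ i} β := hmin
  have hAy : A *ᵥ y = b := by
    rw [hy, mulVec_mulVec, mul_nonsing_inv A (isUnit_iff_ne_zero.2 hA.det_pos.ne'), one_mulVec]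
  have hsymm : A.IsSymm := hA.isHermitian
  have hgrad := hminOn.nonneg_add_two_mul_dotProduct hsymm hβ hβi hν hrep hν1
  have hkey := hminOn.mul_dotProduct_mul_sum_le hβ hA.posSemidef hAy hα.le hη0 hgrad
  have hS : 0 < ∑ j, β j := hβi.trans_le (single_le_sum (fun j _ => hβ j) (mem_univ i))
  set M := univ.sup' (univ_nonempty_iff.mpr ⟨⟨0, hp⟩⟩) (fun j => b ⬝ᵥ x j)
  have hbound : (∑ j, β j • x j) ⬝ᵥ b ≤ (∑ j, β j) * M := by
    rw [sum_dotProduct, Finset.sum_mul]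
    refine sum_le_sum fun j _ => ?_
    rw [smul_dotProduct, smul_eq_mul, dotProduct_comm]
    exact mul_le_mul_of_nonneg_left (le_sup' (fun j => b ⬝ᵥ x j) (mem_univ j)) (hβ j)
  have hαq : α * (y ⬝ᵥ b) ≤ M :=
    le_of_mul_le_mul_right (hkey.trans (hbound.trans_eq (mul_comm _ _))) hS
  rw [← hy, dotProduct_comm] at hη
  linarith

theorem stmt2 {n p : ℕ} (hp : 0 < p)
    (A : Matrix (Fin n) (Fin n) ℝ) (hA : A.PosDef)
    (b : Fin n → ℝ) (hb : b ≠ 0) (c : ℝ)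
    (y : Fin n → ℝ) (hy : y = A⁻¹.mulVec b)
    (x : Fin p → (Fin n → ℝ))
    (α : ℝ) (hα : 0 < α)
    (hvnc : VertexNonCover x (α • y))
    (η : ℝ) (hη0 : 0 < η)
    (hη : η < 2 * α * (b ⬝ᵥ A⁻¹.mulVec b) - 2 * Finset.univ.sup'
      (Finset.univ_nonempty_iff.mpr ⟨⟨0, hp⟩⟩) (fun i => b ⬝ᵥ x i))
    (T : Set (Fin n → ℝ))
    (hT : T = {v | ∃ lam : Fin p → ℝ, (∀ i, 0 ≤ lam i) ∧
      v = ∑ i, lam i • (x i - α • y)})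
    (I : Set (Fin p))
    (hI : ∀ i, GeneratesExtremeRay T (x i - α • y) → i ∈ I)
    (β : Fin p → ℝ) (hβ : ∀ i, 0 ≤ β i)
    (hmin : ∀ γ : Fin p → ℝ, (∀ i, 0 ≤ γ i) →
      ((∑ i, β i • x i) ⬝ᵥ A.mulVec (∑ i, β i • x i)
          - 2 * ((∑ i, β i • x i) ⬝ᵥ b) + c) + η * ∑ i, β i ≤
        ((∑ i, γ i • x i) ⬝ᵥ A.mulVec (∑ i, γ i • x i)
          - 2 * ((∑ i, γ i • x i) ⬝ᵥ b) + c) + η * ∑ i, γ i) :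
    ∀ i, i ∉ I → β i = 0 :=
  stmt2_general hp A hA b c y hy x α hα hvnc η hη0 hη T hT I hI β hβ hmin
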